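/- Let p be an odd prime. Then Σ_{k odd, 1 ≤ k ≤ (p−1)/2} 1/k ≡ (1/2)(1 − 2·N_{p-2}) (mod p), i.e. the sum of reciprocals of the odd integers up to (p−1)/2 is congruent modulo p to one half of (one minus twice the number of permutations of {1,…,p−2} with an even number of ascents). -/

import Mathlib

/-- The number of ascents of a permutation of `Fin n` (positions `i` with `σ i < σ (i+1)`). -/
def numAscents {n : ℕ} (σ : Equiv.Perm (Fin n)) : ℕ :=
  (Finset.univ.filter (fun i : Fin (n - 1) =>
    σ ⟨i.val, by have := i.isLt; omega⟩ < σ ⟨i.val + 1, by have := i.isLt; omega⟩)).card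

/-- The number of permutations of `Fin n` with an even number of ascents. -/
def evenAscentPerms (n : ℕ) : ℕ :=
  (Finset.univ.filter (fun σ : Equiv.Perm (Fin n) => Even (numAscents σ))).card

/-- The Eulerian number `E(n, m)`: permutations of `Fin n` with exactly `m` ascents. -/
def eulerian (n m : ℕ) : ℕ :=
  (Finset.univ.filter (fun σ : Equiv.Perm (Fin n) => numAscents σ = m)).card

/-- `x ≡ 0 (mod p^k)` for a rational `x`: either `x = 0` or the `p`-adic valuation
of `x` is at least `k`. -/
def PadicDvd (p k : ℕ) (x : ℚ) : Prop :=
  x = 0 ∨ (k : ℤ) ≤ padicValRat p x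

/-!
Inserting the largest letter into a permutation of `Fin m` at each of the `m + 1` positions
either keeps the number of ascents or raises it by one. This gives the recurrence
`E(m+1, k+1) = (k+2) E(m, k+1) + (m-k) E(m, k)` for the Eulerian numbers, hence the explicit
formula `E(n, k) = ∑_{j ≤ k} (-1)^j C(n+1, j) (k+1-j)^n`. For `n = p - 2` we have
`C(p-1, j) ≡ (-1)^j` and `x^(p-2) ≡ x⁻¹`, so `E(p-2, k) ≡ H_{k+1} (mod p)`. Then
`2 N_{p-2} = (p-2)! + ∑_k (-1)^k E(p-2, k)` is an alternating sum of harmonic numbers, and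
Wilson's theorem together with `H_{p-1} ≡ 0` turns it into `1 - H_{(p-1)/2} / 2`. The
reflection `k ↦ p - k` shows that the odd part of `H_{(p-1)/2}` is `H_{(p-1)/2} / 4`. Finally the
rational congruence is obtained by reducing `p`-integral rationals modulo `p`.
-/

open Finset
open scoped Nat

/-- Ascents among the values `f 0, …, f n`. -/
def countAscents (f : ℕ → ℕ) (n : ℕ) : ℕ := #{j ∈ range n | f j < f (j + 1)}

lemma countAscents_succ (f : ℕ → ℕ) (n : ℕ) :
    countAscents f (n + 1) =
      (if f 0 < f 1 then 1 else 0) + countAscents (fun j => f (j + 1)) n := by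
  simp only [countAscents, card_filter, sum_range_succ' _ n]
  ring

lemma countAscents_congr {f g : ℕ → ℕ} {n : ℕ} (h : ∀ j ≤ n, f j = g j) :
    countAscents f n = countAscents g n := by
  refine congrArg card (filter_congr fun j hj => ?_)
  rw [mem_range] at hj
  rw [h j (by omega), h (j + 1) (by omega)]

def insertAt (t v : ℕ) (f : ℕ → ℕ) (j : ℕ) : ℕ :=
  if j < t then f j else if j = t then v else f (j - 1)

/-- Inserting a value larger than all others adds an ascent in front of it, unless it is
inserted first, and destroys the ascent it is inserted into, if any. -/
lemma countAscents_insertAt (f : ℕ → ℕ) {v n t : ℕ} (hv : ∀ j < n, f j < v)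
    (ht : t ≤ n) :
    countAscents (insertAt t v f) n = countAscents f (n - 1) +
      if t = 0 ∨ t < n ∧ f (t - 1) < f t then 0 else 1 := by
  induction t generalizing f n with
  | zero =>
    obtain _ | n := n
    · rfl
    simp [countAscents_succ, insertAt, (hv 0 (by omega)).not_gt]
  | succ t ih =>
    obtain _ | n := n
    · omega
    have hshift : (fun j => insertAt (t + 1) v f (j + 1)) = insertAt t v (f <| · + 1) := by
      funext j; simp only [insertAt]; split_ifs <;> first | omega | rfl | congr 1; omega
    rw [countAscents_succ, hshift, ih _ (fun j hj => hv _ (by omega)) (by omega)]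
    obtain _ | n := n
    · obtain rfl : t = 0 := by omega
      simp [insertAt, countAscents, hv 0 (by omega)]
    simp only [Nat.add_sub_cancel]
    rw [countAscents_succ (n := n)]
    have := hv 0 (by omega)
    rcases Nat.eq_zero_or_pos t with rfl | ht0
    · simp [insertAt, this]
      split_ifs <;> omega
    · have hcond : t = 0 ∨ t < n + 1 ∧ f t < f (t + 1) ↔
          t + 1 = 0 ∨ t + 1 < n + 1 + 1 ∧ f t < f (t + 1) := by omega
      simp only [insertAt, if_pos (show 0 < t + 1 by omega), if_pos (show 1 < t + 1 by omega),
        Nat.sub_add_cancel ht0, if_congr hcond rfl rfl]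
      ring

lemma insertAt_le {f : ℕ → ℕ} {v : ℕ} (hf : ∀ j, f j ≤ v) (t j : ℕ) :
    insertAt t v f j ≤ v := by
  unfold insertAt; split_ifs <;> simp [hf]

lemma insertAt_injOn {f : ℕ → ℕ} {v n t : ℕ} (hf : Set.InjOn f (Set.Iio n))
    (hv : ∀ j < n, f j < v) (ht : t ≤ n) : Set.InjOn (insertAt t v f) (Set.Iic n) := by
  intro i hi i' hi' h
  simp only [Set.mem_Iic] at hi hi'
  unfold insertAt at h
  split_ifs at h <;> first
    | omega
    | exact absurd h (hv _ (by omega)).ne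
    | exact absurd h.symm (hv _ (by omega)).ne
    | have := hf (Set.mem_Iio.mpr (by omega)) (Set.mem_Iio.mpr (by omega)) h; omega

lemma insertAt_inj {f g : ℕ → ℕ} {v n t s : ℕ} (hg : ∀ j < n, g j < v)
    (ht : t ≤ n) (hs : s ≤ n) (h : ∀ j ≤ n, insertAt t v f j = insertAt s v g j) :
    t = s ∧ ∀ j < n, f j = g j := by
  have hts : t = s := by
    by_contra hne
    have hvt := h t ht
    simp only [insertAt, lt_irrefl, if_false, if_true] at hvt
    split_ifs at hvt <;> first | omega | exact (hg _ (by omega)).ne' hvt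
  subst hts
  refine ⟨rfl, fun j hj => ?_⟩
  by_cases hjt : j < t
  · simpa [insertAt, hjt] using h j (by omega)
  · simpa [insertAt, show ¬ j + 1 < t by omega, show j + 1 ≠ t by omega]
      using h (j + 1) (by omega)

section Permutations

open Equiv

variable {n m : ℕ}

def permSeq (σ : Perm (Fin n)) (j : ℕ) : ℕ := if h : j < n then σ ⟨j, h⟩ else 0

lemma permSeq_lt (σ : Perm (Fin n)) {j : ℕ} (hj : j < n) : permSeq σ j < n := by
  simp [permSeq, hj]

lemma permSeq_le (σ : Perm (Fin n)) (j : ℕ) : permSeq σ j ≤ n := by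
  unfold permSeq; split_ifs <;> omega

lemma permSeq_injOn (σ : Perm (Fin n)) : Set.InjOn (permSeq σ) (Set.Iio n) := by
  intro j hj j' hj' h
  simp only [Set.mem_Iio] at hj hj'
  simpa [permSeq, hj, hj', Fin.val_inj] using h

lemma eq_of_permSeq_eq {σ τ : Perm (Fin n)} (h : ∀ j < n, permSeq σ j = permSeq τ j) :
    σ = τ :=
  Equiv.ext fun i => Fin.ext <| by simpa [permSeq] using h i i.isLt

lemma numAscents_eq_countAscents (σ : Perm (Fin n)) :
    numAscents σ = countAscents (permSeq σ) (n - 1) := by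
  rw [numAscents, countAscents, card_filter, card_filter,
    ← Fin.sum_univ_eq_sum_range (fun j => if permSeq σ j < permSeq σ (j + 1) then 1 else 0)]
  refine sum_congr rfl fun i _ => ?_
  simp [permSeq, show (i : ℕ) < n by omega, show (i : ℕ) + 1 < n by omega]

noncomputable def insertMax (t : Fin (m + 1)) (τ : Perm (Fin m)) : Perm (Fin (m + 1)) :=
  Equiv.ofBijective (fun i => ⟨insertAt t m (permSeq τ) i,
      Nat.lt_succ_of_le (insertAt_le (permSeq_le τ) _ _)⟩) <|
    Finite.injective_iff_bijective.mp fun i i' h =>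
      Fin.ext <| insertAt_injOn (permSeq_injOn τ) (fun _ => permSeq_lt τ) t.is_le
        (Set.mem_Iic.mpr i.is_le) (Set.mem_Iic.mpr i'.is_le) (Fin.mk.inj h)

lemma permSeq_insertMax (t : Fin (m + 1)) (τ : Perm (Fin m)) {j : ℕ} (hj : j ≤ m) :
    permSeq (insertMax t τ) j = insertAt t m (permSeq τ) j := by
  simp [permSeq, Nat.lt_succ_of_le hj, insertMax]

lemma numAscents_insertMax (t : Fin (m + 1)) (τ : Perm (Fin m)) :
    numAscents (insertMax t τ) = numAscents τ +
      if (t : ℕ) = 0 ∨ (t : ℕ) < m ∧ permSeq τ (t - 1) < permSeq τ t then 0 else 1 := by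
  rw [numAscents_eq_countAscents, numAscents_eq_countAscents, Nat.add_sub_cancel,
    countAscents_congr fun j hj => permSeq_insertMax t τ hj,
    countAscents_insertAt _ (fun _ => permSeq_lt τ) t.is_le]

lemma insertMax_bijective :
    Function.Bijective fun x : Fin (m + 1) × Perm (Fin m) => insertMax x.1 x.2 := by
  refine (Fintype.bijective_iff_injective_and_card _).mpr
    ⟨?_, by simp [Fintype.card_perm, Nat.factorial_succ]⟩
  rintro ⟨t, τ⟩ ⟨s, υ⟩ h
  have hseq : ∀ j ≤ m, insertAt t m (permSeq τ) j = insertAt s m (permSeq υ) j :=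
    fun j hj => by
    rw [← permSeq_insertMax t τ hj, ← permSeq_insertMax s υ hj]
    exact congrArg (permSeq · j) h
  obtain ⟨hts, hτυ⟩ := insertAt_inj (fun _ => permSeq_lt υ) t.is_le s.is_le hseq
  rw [Fin.ext hts, eq_of_permSeq_eq hτυ]

end Permutations

lemma card_filter_add_ite_eq {α : Type*} (s : Finset α) (P : α → Prop) [DecidablePred P]
    (a k : ℕ) :
    #{x ∈ s | a + (if P x then 0 else 1) = k} =
      (if a = k then #{x ∈ s | P x} else 0) + (if a + 1 = k then #{x ∈ s | ¬ P x} else 0) := by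
  by_cases hk : a = k
  · rw [if_pos hk, if_neg (by omega), add_zero]
    exact congrArg card (filter_congr fun x _ => by split_ifs <;> simp_all)
  by_cases hk' : a + 1 = k
  · rw [if_neg hk, if_pos hk', zero_add]
    exact congrArg card (filter_congr fun x _ => by split_ifs <;> simp_all)
  rw [if_neg hk, if_neg hk', card_eq_zero, filter_eq_empty_iff]
  intro x _
  split_ifs <;> omega

lemma card_filter_range_no_new_ascent (f : ℕ → ℕ) (m : ℕ) :
    #{t ∈ range (m + 1) | t = 0 ∨ t < m ∧ f (t - 1) < f t} = countAscents f (m - 1) + 1 := by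
  rw [card_filter, sum_range_succ', if_pos (Or.inl rfl), countAscents, card_filter]
  congr 1
  obtain _ | m := m
  · rfl
  rw [sum_range_succ, if_neg (by omega), add_zero, Nat.add_sub_cancel]
  refine sum_congr rfl fun j hj => ?_
  rw [mem_range] at hj
  simp [hj]

lemma numAscents_le {n : ℕ} (σ : Equiv.Perm (Fin n)) : numAscents σ ≤ n - 1 :=
  (card_filter_le _ _).trans (by simp)

lemma eulerian_succ_eq_sum (m k : ℕ) :
    eulerian (m + 1) k = ∑ τ : Equiv.Perm (Fin m),
      ((if numAscents τ = k then k + 1 else 0) +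
        (if numAscents τ + 1 = k then m - numAscents τ else 0)) := by
  rw [eulerian, card_filter, ← insertMax_bijective.sum_comp, Fintype.sum_prod_type, sum_comm]
  refine sum_congr rfl fun τ _ => ?_
  simp_rw [numAscents_insertMax]
  set P : ℕ → Prop := fun t => t = 0 ∨ t < m ∧ permSeq τ (t - 1) < permSeq τ t
  have hP : #{t : Fin (m + 1) | P t} = numAscents τ + 1 := by
    rw [card_filter, Fin.sum_univ_eq_sum_range (fun t => if P t then 1 else 0), ← card_filter,
      card_filter_range_no_new_ascent, numAscents_eq_countAscents]
  have hnotP : #{t : Fin (m + 1) | ¬ P t} = m - numAscents τ := by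
    have := card_filter_add_card_filter_not (s := univ) (fun t : Fin (m + 1) => P t)
    simp only [card_univ, Fintype.card_fin] at this
    omega
  rw [← card_filter, card_filter_add_ite_eq, hP, hnotP]
  split_ifs <;> omega

lemma eulerian_zero_left (k : ℕ) : eulerian 0 k = if k = 0 then 1 else 0 := by
  rw [eulerian, card_filter]
  split_ifs with hk <;> simp [numAscents, eq_comm, hk]

lemma eulerian_succ_zero (m : ℕ) : eulerian (m + 1) 0 = eulerian m 0 := by
  rw [eulerian_succ_eq_sum, eulerian, card_filter]
  refine sum_congr rfl fun τ _ => ?_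
  by_cases h : numAscents τ = 0 <;> simp [h]

lemma eulerian_succ_succ {R : Type*} [CommRing R] (m k : ℕ) :
    (eulerian (m + 1) (k + 1) : R) =
      (k + 2) * eulerian m (k + 1) + ((m : R) - k) * eulerian m k := by
  have hsub : ∀ τ : Equiv.Perm (Fin m), numAscents τ = k →
      ((m - numAscents τ : ℕ) : R) = m - k := fun τ hτ => by
    rw [Nat.cast_sub (by have := numAscents_le τ; omega), hτ]
  simp only [eulerian_succ_eq_sum, Nat.cast_sum, Nat.cast_add, Nat.cast_ite, Nat.cast_zero,
    sum_add_distrib, add_left_inj]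
  rw [sum_ite, sum_const_zero, add_zero, sum_ite, sum_const_zero, add_zero,
    sum_congr rfl fun τ hτ => hsub τ (mem_filter.mp hτ).2, sum_const, sum_const, eulerian,
    eulerian, nsmul_eq_mul, nsmul_eq_mul]
  push_cast
  ring

def eulerianSum (R : Type*) [CommRing R] (n k : ℕ) : R :=
  ∑ j ∈ range (k + 1), (-1) ^ j * ((n + 1).choose j : R) * ((k : R) + 1 - j) ^ n

section EulerianSum

variable {R : Type*} [CommRing R]

lemma eulerianSum_zero_left (k : ℕ) : eulerianSum R 0 k = if k = 0 then 1 else 0 := by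
  simp only [eulerianSum, pow_zero, mul_one, zero_add]
  obtain _ | k := k
  · simp
  · rw [sum_range_succ', sum_range_succ']
    simp [Nat.choose_eq_zero_of_lt]

lemma eulerianSum_zero_right (n : ℕ) : eulerianSum R n 0 = 1 := by
  simp [eulerianSum]

lemma natCast_succ_mul_choose_succ (n j : ℕ) :
    ((j : R) + 1) * ((n + 1).choose (j + 1) : R) = (n + 1) * (n.choose j : R) := by
  have h := congrArg (Nat.cast : ℕ → R) (Nat.add_one_mul_choose_eq n j)
  push_cast at h
  linear_combination -h

lemma natCast_sub_mul_choose_succ (n j : ℕ) :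
    ((n : R) + 1 - j) * ((n + 1).choose j : R) = (n + 1) * (n.choose j : R) := by
  rcases le_or_gt j (n + 1) with hj | hj
  · have h := congrArg (Nat.cast : ℕ → R) (Nat.choose_mul_succ_eq n j)
    push_cast [Nat.cast_sub hj] at h
    linear_combination -h
  · simp [Nat.choose_eq_zero_of_lt hj, Nat.choose_eq_zero_of_lt (Nat.lt_of_succ_lt hj)]

lemma eulerianSum_succ_succ (n k : ℕ) :
    eulerianSum R (n + 1) (k + 1) =
      (k + 2) * eulerianSum R n (k + 1) + ((n : R) - k) * eulerianSum R n k := by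
  set T := ∑ j ∈ range (k + 1), (-1 : R) ^ j * (n.choose j : R) * ((k : R) + 1 - j) ^ n
  set A := ∑ j ∈ range (k + 2),
    (-1 : R) ^ j * ((n + 1).choose j : R) * ((k : R) + 2 - j) ^ (n + 1)
  set B := ∑ j ∈ range (k + 1),
    (-1 : R) ^ j * ((n + 1).choose j : R) * ((k : R) + 1 - j) ^ (n + 1)
  have hpascal : eulerianSum R (n + 1) (k + 1) = A - B := by
    simp only [eulerianSum, A, B]
    rw [sum_range_succ', sum_range_succ' _ (k + 1)]
    have hterm : ∀ j ∈ range (k + 1), (-1 : R) ^ (j + 1) * ((n + 1 + 1).choose (j + 1) : R) *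
        (((k + 1 : ℕ) : R) + 1 - (j + 1 : ℕ)) ^ (n + 1) =
          (-1) ^ (j + 1) * ((n + 1).choose (j + 1) : R) * ((k : R) + 2 - (j + 1 : ℕ)) ^ (n + 1) -
            (-1) ^ j * ((n + 1).choose j : R) * ((k : R) + 1 - j) ^ (n + 1) := fun j _ => by
      rw [Nat.choose_succ_succ (n + 1)]
      push_cast
      ring
    rw [sum_congr rfl hterm, sum_sub_distrib]
    push_cast [Nat.choose_zero_right]
    ring
  have hA : A = (k + 2) * eulerianSum R n (k + 1) + (n + 1) * T := by
    have hU : ∑ j ∈ range (k + 2), (-1 : R) ^ j * ((j : R) * ((n + 1).choose j : R)) *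
        ((k : R) + 2 - j) ^ n = -((n + 1) * T) := by
      rw [sum_range_succ', mul_sum, ← sum_neg_distrib]
      simp only [Nat.cast_zero, zero_mul, mul_zero, add_zero]
      refine sum_congr rfl fun j _ => ?_
      push_cast
      linear_combination (-1 : R) ^ (j + 1) * ((k : R) + 1 - j) ^ n *
        natCast_succ_mul_choose_succ (R := R) n j
    rw [← neg_neg ((n + 1) * T), ← hU, ← sub_eq_add_neg, eulerianSum, mul_sum,
      ← sum_sub_distrib]
    refine sum_congr rfl fun j _ => ?_
    push_cast
    ring
  have hB : B = ((k : R) - n) * eulerianSum R n k + (n + 1) * T := by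
    rw [eulerianSum, mul_sum, mul_sum, ← sum_add_distrib]
    refine sum_congr rfl fun j _ => ?_
    linear_combination (-1 : R) ^ j * ((k : R) + 1 - j) ^ n *
      natCast_sub_mul_choose_succ (R := R) n j
  rw [hpascal, hA, hB]
  ring

end EulerianSum

lemma natCast_eulerian {R : Type*} [CommRing R] (n k : ℕ) :
    (eulerian n k : R) = eulerianSum R n k := by
  induction n generalizing k with
  | zero => rw [eulerian_zero_left, eulerianSum_zero_left]; split_ifs <;> simp
  | succ n ih =>
    obtain _ | k := k
    · rw [eulerian_succ_zero, ih, eulerianSum_zero_right, eulerianSum_zero_right]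
    · rw [eulerian_succ_succ, ih, ih, eulerianSum_succ_succ]

lemma two_mul_evenAscentPerms {R : Type*} [CommRing R] {n : ℕ} (hn : n ≠ 0) :
    2 * (evenAscentPerms n : R) = n ! + ∑ k ∈ range n, (-1) ^ k * (eulerian n k : R) := by
  have hsigned : ∑ k ∈ range n, (-1) ^ k * (eulerian n k : R) =
      ∑ σ : Equiv.Perm (Fin n), (-1 : R) ^ numAscents σ := by
    rw [← sum_fiberwise_of_maps_to (g := numAscents) (t := range n)
      fun σ _ => mem_range.mpr ((numAscents_le σ).trans_lt (by omega))]
    refine sum_congr rfl fun k _ => ?_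
    rw [sum_congr rfl fun σ hσ => by rw [(mem_filter.mp hσ).2], sum_const, nsmul_eq_mul,
      eulerian, mul_comm]
  have hcard := card_filter_add_card_filter_not (s := univ) fun σ : Equiv.Perm (Fin n) =>
    Even (numAscents σ)
  rw [card_univ, Fintype.card_perm, Fintype.card_fin] at hcard
  rw [hsigned, ← sum_filter_add_sum_filter_not _ fun σ => Even (numAscents σ),
    sum_congr rfl fun σ hσ => (mem_filter.mp hσ).2.neg_one_pow,
    sum_congr rfl fun σ hσ => (Nat.not_even_iff_odd.mp (mem_filter.mp hσ).2).neg_one_pow,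
    sum_const, sum_const, ← hcard, evenAscentPerms]
  push_cast
  ring

def harmonicSum (K : Type*) [Field K] (t : ℕ) : K := ∑ i ∈ Icc 1 t, (i : K)⁻¹

section Harmonic

variable {K : Type*} [Field K]

lemma harmonicSum_succ (t : ℕ) :
    harmonicSum K (t + 1) = harmonicSum K t + ((t + 1 : ℕ) : K)⁻¹ :=
  sum_Icc_succ_top (by omega) _

lemma sum_even_inv_eq_half_harmonicSum (t : ℕ) :
    ∑ k ∈ Icc 1 t with Even k, (k : K)⁻¹ = 2⁻¹ * harmonicSum K (t / 2) := by
  rw [harmonicSum, mul_sum]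
  refine sum_nbij' (· / 2) (2 * ·) ?_ ?_ ?_ ?_ ?_
  all_goals
    intro k hk
    simp only [mem_filter, mem_Icc, Nat.even_iff] at hk ⊢
  any_goals omega
  obtain ⟨j, rfl⟩ : 2 ∣ k := Nat.dvd_of_mod_eq_zero hk.2
  simp [mul_comm]

lemma sum_range_neg_one_pow_mul_harmonicSum (r : ℕ) :
    ∑ k ∈ range (2 * r + 1), (-1 : K) ^ k * harmonicSum K (k + 1) =
      harmonicSum K (2 * r + 1) - 2⁻¹ * harmonicSum K r := by
  induction r with
  | zero => simp [harmonicSum]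
  | succ r ih =>
    rw [show 2 * (r + 1) + 1 = 2 * r + 1 + 1 + 1 by ring, sum_range_succ, sum_range_succ, ih,
      harmonicSum_succ (2 * r + 1 + 1), harmonicSum_succ (2 * r + 1), harmonicSum_succ r,
      (odd_two_mul_add_one r).neg_one_pow,
      (show Even (2 * r + 1 + 1) from ⟨r + 1, by ring⟩).neg_one_pow,
      show ((2 * r + 1 + 1 : ℕ) : K) = 2 * (r + 1 : ℕ) by push_cast; ring, mul_inv]
    ring

end Harmonic

lemma ZMod.natCast_ne_zero_of_lt {p k : ℕ} (hk0 : k ≠ 0) (hkp : k < p) :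
    (k : ZMod p) ≠ 0 := by
  rw [Ne, ZMod.natCast_eq_zero_iff]
  exact fun h => absurd (Nat.le_of_dvd (Nat.pos_of_ne_zero hk0) h) (by omega)

section PrimeField

variable {p : ℕ} [Fact p.Prime]

lemma ZMod.two_ne_zero_of_odd (hodd : Odd p) : (2 : ZMod p) ≠ 0 :=
  Ring.two_ne_zero <| by rw [ZMod.ringChar_zmod_n]; rintro rfl; exact absurd hodd (by decide)

lemma ZMod.inv_natCast_sub {k : ℕ} (hk : k ≤ p) :
    ((p - k : ℕ) : ZMod p)⁻¹ = -(k : ZMod p)⁻¹ := by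
  rw [Nat.cast_sub hk, ZMod.natCast_self, zero_sub, inv_neg]

lemma harmonicSum_prime_sub_one (hodd : Odd p) : harmonicSum (ZMod p) (p - 1) = 0 := by
  have hneg : harmonicSum (ZMod p) (p - 1) = -harmonicSum (ZMod p) (p - 1) := by
    rw [harmonicSum, ← sum_neg_distrib]
    refine sum_nbij' (p - ·) (p - ·) ?_ ?_ ?_ ?_ ?_
    all_goals
      intro k hk
      simp only [mem_Icc] at hk ⊢
    any_goals omega
    rw [ZMod.inv_natCast_sub (by omega), neg_neg]
  exact (mul_eq_zero.mp (by linear_combination hneg : (2 : ZMod p) * _ = 0)).resolve_left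
    (ZMod.two_ne_zero_of_odd hodd)

lemma sum_odd_inv_eq_quarter_harmonicSum (hodd : Odd p) :
    ∑ k ∈ Icc 1 ((p - 1) / 2) with Odd k, (k : ZMod p)⁻¹ =
      4⁻¹ * harmonicSum (ZMod p) ((p - 1) / 2) := by
  obtain ⟨q, rfl⟩ := hodd
  simp only [Nat.add_sub_cancel, Nat.mul_div_cancel_left q two_pos]
  set O := ∑ k ∈ Icc 1 q with Odd k, (k : ZMod (2 * q + 1))⁻¹
  have hsplit : O + ∑ k ∈ Icc 1 q with Even k, (k : ZMod (2 * q + 1))⁻¹ =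
      harmonicSum _ q := by
    simp only [O, ← Nat.not_odd_iff_even]
    exact sum_filter_add_sum_filter_not _ _ _
  have hreflect : O = -∑ k ∈ Ioc q (2 * q) with Even k, (k : ZMod (2 * q + 1))⁻¹ := by
    rw [← sum_neg_distrib]
    refine sum_nbij' (2 * q + 1 - ·) (2 * q + 1 - ·) ?_ ?_ ?_ ?_ ?_
    all_goals
      intro k hk
      simp only [mem_filter, mem_Icc, mem_Ioc, Nat.odd_iff, Nat.even_iff] at hk ⊢
    any_goals omega
    rw [ZMod.inv_natCast_sub (by omega), neg_neg]
  have hevens : ∑ k ∈ Icc 1 (2 * q) with Even k, (k : ZMod (2 * q + 1))⁻¹ =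
      ∑ k ∈ Icc 1 q with Even k, (k : ZMod (2 * q + 1))⁻¹ +
        ∑ k ∈ Ioc q (2 * q) with Even k, (k : ZMod (2 * q + 1))⁻¹ := by
    rw [← sum_filter_add_sum_filter_not _ (· ≤ q), filter_filter, filter_filter]
    congr 2 <;> ext k <;> simp only [mem_filter, mem_Icc, mem_Ioc, Nat.even_iff] <;> omega
  rw [sum_even_inv_eq_half_harmonicSum, Nat.mul_div_cancel_left q two_pos] at hevens
  have h2 := ZMod.two_ne_zero_of_odd (p := 2 * q + 1) (odd_two_mul_add_one q)
  have h4 : (4 : ZMod (2 * q + 1))⁻¹ = 2⁻¹ * 2⁻¹ := by rw [← mul_inv]; norm_num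
  rw [h4]
  linear_combination 2⁻¹ * (hsplit + hreflect + hevens) -
    (O + 2⁻¹ * harmonicSum _ q) * mul_inv_cancel₀ h2

lemma natCast_choose_prime_sub_one {j : ℕ} (hj : j < p) :
    (((p - 1).choose j : ℕ) : ZMod p) = (-1) ^ j := by
  induction j with
  | zero => simp
  | succ j ih =>
    have hpascal := congrArg (Nat.cast : ℕ → ZMod p)
      (Nat.choose_succ_succ' (p - 1) j)
    rw [Nat.sub_add_cancel (Fact.out : p.Prime).one_le,
      (ZMod.natCast_eq_zero_iff _ _).mpr ((Fact.out : p.Prime).dvd_choose_self (by omega) hj),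
      Nat.cast_add, ih (by omega)] at hpascal
    linear_combination -hpascal

lemma ZMod.pow_prime_sub_two {x : ZMod p} (hx : x ≠ 0) : x ^ (p - 2) = x⁻¹ := by
  refine eq_inv_of_mul_eq_one_left ?_
  rw [← pow_succ, show p - 2 + 1 = p - 1 by have := (Fact.out : p.Prime).two_le; omega]
  exact ZMod.pow_card_sub_one_eq_one hx

lemma eulerian_prime_sub_two {k : ℕ} (hk : k + 1 < p) :
    (eulerian (p - 2) k : ZMod p) = harmonicSum (ZMod p) (k + 1) := by
  have hp := (Fact.out : p.Prime).two_le
  rw [natCast_eulerian, eulerianSum, harmonicSum, show p - 2 + 1 = p - 1 by omega]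
  refine sum_nbij' (k + 1 - ·) (k + 1 - ·) ?_ ?_ ?_ ?_ ?_
  all_goals
    intro j hj
    simp only [mem_range, mem_Icc] at hj ⊢
  any_goals omega
  have hcast : (k : ZMod p) + 1 - j = ((k + 1 - j : ℕ) : ZMod p) := by
    push_cast [Nat.cast_sub (show j ≤ k + 1 by omega)]
    ring
  rw [natCast_choose_prime_sub_one (by omega), hcast,
    ZMod.pow_prime_sub_two (ZMod.natCast_ne_zero_of_lt (by omega) (by omega)), ← mul_pow]
  simp

lemma factorial_prime_sub_two : ((p - 2)! : ZMod p) = 1 := by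
  have hp := (Fact.out : p.Prime).two_le
  have hwilson := ZMod.wilsons_lemma (p := p)
  rw [show p - 1 = p - 2 + 1 by omega, Nat.factorial_succ, Nat.cast_mul,
    show p - 2 + 1 = p - 1 by omega, Nat.cast_sub (by omega), ZMod.natCast_self] at hwilson
  linear_combination -hwilson

end PrimeField

lemma two_mul_evenAscentPerms_prime_sub_two {p : ℕ} [Fact p.Prime] (hodd : Odd p) :
    2 * (evenAscentPerms (p - 2) : ZMod p) = 1 - 2⁻¹ * harmonicSum (ZMod p) ((p - 1) / 2) := by
  have hp := (Fact.out : p.Prime).two_le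
  obtain ⟨r, hr⟩ : ∃ r, p = 2 * r + 3 := ⟨(p - 3) / 2, by rw [Nat.odd_iff] at hodd; omega⟩
  have hH : harmonicSum (ZMod p) (2 * r + 1) = 1 := by
    have h0 := harmonicSum_prime_sub_one hodd
    rw [show p - 1 = 2 * r + 1 + 1 by omega, harmonicSum_succ,
      show 2 * r + 1 + 1 = p - 1 by omega, ZMod.inv_natCast_sub (by omega), Nat.cast_one,
      inv_one] at h0
    linear_combination h0
  have hinv : ((r + 1 : ℕ) : ZMod p)⁻¹ = -2 := by
    have hp0 : ((2 * r + 3 : ℕ) : ZMod p) = 0 := by rw [← hr, ZMod.natCast_self]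
    push_cast at hp0 ⊢
    exact inv_eq_of_mul_eq_one_right (by linear_combination -hp0)
  rw [two_mul_evenAscentPerms (by omega), factorial_prime_sub_two,
    sum_congr rfl fun k hk => by rw [eulerian_prime_sub_two (by rw [mem_range] at hk; omega)],
    show p - 2 = 2 * r + 1 by omega, sum_range_neg_one_pow_mul_harmonicSum, hH,
    show (p - 1) / 2 = r + 1 by omega, harmonicSum_succ, hinv]
  linear_combination (-1 : ZMod p) * mul_inv_cancel₀ (ZMod.two_ne_zero_of_odd hodd)

/-- `x` is a `p`-integral rational whose reduction modulo `p` is `r`. -/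
def HasResidue (p : ℕ) (x : ℚ) (r : ZMod p) : Prop :=
  ∃ a d : ℤ, (d : ZMod p) ≠ 0 ∧ x * d = a ∧ (a : ZMod p) = r * d

namespace HasResidue

variable {p : ℕ} {x y : ℚ} {r s : ZMod p}

lemma neg (hx : HasResidue p x r) : HasResidue p (-x) (-r) := by
  obtain ⟨a, d, hd, hxa, har⟩ := hx
  exact ⟨-a, d, hd, by push_cast; linear_combination -hxa,
    by push_cast; linear_combination -har⟩

variable [Fact p.Prime]

lemma intCast (n : ℤ) : HasResidue p n n :=
  ⟨n, 1, by simp, by simp, by simp⟩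

lemma inv_natCast {k : ℕ} (hk : (k : ZMod p) ≠ 0) :
    HasResidue p (k : ℚ)⁻¹ (k : ZMod p)⁻¹ := by
  have hk' : (k : ℚ) ≠ 0 := Nat.cast_ne_zero.mpr <| by rintro rfl; simp at hk
  exact ⟨1, k, by exact_mod_cast hk, by simp [hk'], by simp [hk]⟩

lemma add (hx : HasResidue p x r) (hy : HasResidue p y s) : HasResidue p (x + y) (r + s) := by
  obtain ⟨a, d, hd, hxa, har⟩ := hx
  obtain ⟨b, e, he, hyb, hbs⟩ := hy
  refine ⟨a * e + b * d, d * e, by push_cast; exact mul_ne_zero hd he, ?_, ?_⟩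
  · push_cast
    linear_combination (e : ℚ) * hxa + (d : ℚ) * hyb
  · push_cast
    linear_combination (e : ZMod p) * har + (d : ZMod p) * hbs

lemma sub (hx : HasResidue p x r) (hy : HasResidue p y s) : HasResidue p (x - y) (r - s) := by
  simpa only [sub_eq_add_neg] using hx.add hy.neg

lemma mul (hx : HasResidue p x r) (hy : HasResidue p y s) : HasResidue p (x * y) (r * s) := by
  obtain ⟨a, d, hd, hxa, har⟩ := hx
  obtain ⟨b, e, he, hyb, hbs⟩ := hy
  refine ⟨a * b, d * e, by push_cast; exact mul_ne_zero hd he, ?_, ?_⟩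
  · push_cast
    rw [← hxa, ← hyb]
    ring
  · push_cast
    rw [har, hbs]
    ring

lemma sum {ι : Type*} (t : Finset ι) {f : ι → ℚ} {g : ι → ZMod p}
    (h : ∀ i ∈ t, HasResidue p (f i) (g i)) :
    HasResidue p (∑ i ∈ t, f i) (∑ i ∈ t, g i) := by
  classical
  induction t using Finset.induction_on with
  | empty => simpa using intCast (p := p) 0
  | insert i t hi ih =>
    rw [sum_insert hi, sum_insert hi]
    exact (h i (mem_insert_self i t)).add (ih fun j hj => h j (mem_insert_of_mem hj))

lemma padicDvd_one (hx : HasResidue p x 0) : PadicDvd p 1 x := by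
  obtain ⟨a, d, hd, hxa, ha⟩ := hx
  rw [zero_mul, ZMod.intCast_zmod_eq_zero_iff_dvd] at ha
  have hd0 : (d : ℚ) ≠ 0 := Int.cast_ne_zero.mpr <| by rintro rfl; simp at hd
  rcases eq_or_ne a 0 with rfl | ha0
  · left
    simpa [hd0] using hxa
  right
  have hpd : ¬ (p : ℤ) ∣ d := by rwa [← ZMod.intCast_zmod_eq_zero_iff_dvd]
  rw [eq_div_of_mul_eq hd0 hxa, padicValRat.div (by exact_mod_cast ha0) hd0,
    padicValRat.of_int, padicValRat.of_int, padicValInt.eq_zero_of_not_dvd hpd]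
  have := ((padicValInt_dvd_iff 1 a).mp (by simpa using ha)).resolve_left ha0
  push_cast
  omega

end HasResidue

theorem odd_harmonic_half_sum_eq_half_one_sub_twice_even_ascent_perms
    (p : ℕ) (hp : p.Prime) (hodd : Odd p) :
    PadicDvd p 1 ((∑ k ∈ (Finset.Icc 1 ((p - 1) / 2)).filter (fun k => Odd k), (1 : ℚ) / k) -
      (1 / 2) * (1 - 2 * (evenAscentPerms (p - 2) : ℚ))) := by
  have : Fact p.Prime := ⟨hp⟩
  have hzero : (∑ k ∈ Icc 1 ((p - 1) / 2) with Odd k, (k : ZMod p)⁻¹) -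
      2⁻¹ * (1 - 2 * (evenAscentPerms (p - 2) : ZMod p)) = 0 := by
    rw [sum_odd_inv_eq_quarter_harmonicSum hodd, two_mul_evenAscentPerms_prime_sub_two hodd,
      show (4 : ZMod p)⁻¹ = 2⁻¹ * 2⁻¹ by rw [← mul_inv]; norm_num]
    ring
  apply HasResidue.padicDvd_one
  rw [← hzero]
  simp only [one_div]
  refine (HasResidue.sum _ fun k hk => HasResidue.inv_natCast ?_).sub (.mul ?_ ?_)
  · rw [mem_filter, mem_Icc] at hk
    exact ZMod.natCast_ne_zero_of_lt (by omega) (by omega)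
  · exact_mod_cast HasResidue.inv_natCast (k := 2) <| by
      exact_mod_cast ZMod.two_ne_zero_of_odd hodd
  · exact_mod_cast HasResidue.intCast (p := p) (1 - 2 * (evenAscentPerms (p - 2) : ℤ))
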